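/- Let h be the Peterson Hessenberg function h'(i) = i+1 for 1 ≤ i ≤ n-1 and h'(n) = n. A permutation w ∈ S_n is an h'-permissible filling of the one-row diagram with n boxes if and only if the one-line notation of w is an increasing sequence of decreasing staircases, i.e., w is a concatenation of blocks, each of the form (k, k-1, ..., j), where each entry of a block is smaller than every entry of any later block. -/

import Mathlib

/-!
For the Peterson function the condition `k ≤ h'(j)` says that each letter exceeds its right
neighbour by at most one (the cap `h'(n) = n` is automatic). Such words of distinct letters are
built from the right: prepending `a` to an increasing sequence of staircases starting with `b`,
either `a = b + 1` extends the first staircase, or `a < b`; in the latter case `a` avoids the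
first staircase, an interval with top `b`, hence lies below every later letter and starts a new
staircase. Conversely, inside a staircase the steps are `-1`, and between staircases they go up.
-/

open Equiv Finset

open Fin.NatCast in
/-- The simple transposition `s_i = (i, i+1)` (1-indexed letters), as a
permutation of `Fin n` (0-indexed letters `i-1`, `i`). -/
def sT (n : ℕ) [NeZero n] (i : ℕ) : Equiv.Perm (Fin n) :=
  Equiv.swap ((i - 1 : ℕ) : Fin n) ((i : ℕ) : Fin n)

/-- The Bruhat length of a permutation: its number of inversions. -/
def lenP (n : ℕ) (w : Equiv.Perm (Fin n)) : ℕ :=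
  (Finset.univ.filter (fun p : Fin n × Fin n => p.1 < p.2 ∧ w p.2 < w p.1)).card

/-- Bruhat order on `S_n`: the reflexive-transitive closure of
"multiply on the right by a transposition and increase length". -/
def bruhatLE (n : ℕ) (u w : Equiv.Perm (Fin n)) : Prop :=
  Relation.ReflTransGen
    (fun a b => (∃ i j : Fin n, i ≠ j ∧ b = a * Equiv.swap i j) ∧ lenP n a < lenP n b) u w

/-- `u_ℓ(x) = s_{ℓ-1} s_{ℓ-2} ⋯ s_{ℓ-x_ℓ}` (identity if `x_ℓ = 0`). -/
def uPerm (n : ℕ) [NeZero n] (ℓ m : ℕ) : Equiv.Perm (Fin n) :=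
  ((List.range m).map (fun t => sT n (ℓ - 1 - t))).prod

/-- `ω(x) = u_2(x) u_3(x) ⋯ u_n(x)`. -/
def omegaPerm (n : ℕ) [NeZero n] (x : ℕ → ℕ) : Equiv.Perm (Fin n) :=
  ((List.range (n - 1)).map (fun k => uPerm n (k + 2) (x (k + 2)))).prod

/-- A permutation `w ∈ S_n`, viewed as a filling of the one-row diagram with
`n` boxes via its one-line notation `(w(1), …, w(n))` (letters `1, …, n`
encoded as `Fin n`), is `h`-permissible if every horizontal adjacency with `k`
immediately left of `j` satisfies `k ≤ h(j)`. -/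
def IsPermissible (n : ℕ) (h : ℕ → ℕ) (w : Equiv.Perm (Fin n)) : Prop :=
  ∀ i : Fin n, ∀ hi : (i : ℕ) + 1 < n,
    (w i : ℕ) + 1 ≤ h ((w ⟨(i : ℕ) + 1, hi⟩ : ℕ) + 1)

/-- The 334-type Hessenberg function: `h(1) = h(2) = 3`, `h(i) = i + 1` for
`3 ≤ i ≤ n - 1`, and `h(n) = n`. -/
def h334 (n i : ℕ) : ℕ := if i ≤ 2 then 3 else min (i + 1) n

/-- The Peterson Hessenberg function: `h'(i) = i + 1` for `i ≤ n - 1`,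
`h'(n) = n`. -/
def hPet (n i : ℕ) : ℕ := min (i + 1) n

/-- The one-line notation of `w ∈ S_n`, as a list of the letters `1, …, n`. -/
def oneLine (n : ℕ) (w : Equiv.Perm (Fin n)) : List ℕ :=
  List.ofFn fun i : Fin n => (w i : ℕ) + 1

/-- A decreasing staircase: each entry is exactly one less than the previous. -/
def IsDecStair (l : List ℕ) : Prop := List.Chain' (fun a b => b + 1 = a) l

/-- An increasing sequence of (nonempty) decreasing staircases: a concatenation
of decreasing staircase blocks in which every entry of each block is smaller
than every entry of every later block. -/
def IsIncStaircases (l : List ℕ) : Prop :=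
  ∃ blocks : List (List ℕ), l = blocks.flatten ∧
    (∀ b ∈ blocks, b ≠ [] ∧ IsDecStair b) ∧
    List.Pairwise (fun b1 b2 => ∀ a ∈ b1, ∀ c ∈ b2, a < c) blocks

theorem isPermissible_iff_isChain (n : ℕ) (h : ℕ → ℕ) (w : Equiv.Perm (Fin n)) :
    IsPermissible n h w ↔ (oneLine n w).IsChain (fun a b => a ≤ h b) := by
  simp only [List.isChain_iff_getElem, oneLine, List.length_ofFn, List.getElem_ofFn, IsPermissible]
  exact ⟨fun hw i hi => hw ⟨i, by omega⟩ hi, fun hw i hi => hw i hi⟩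

theorem nodup_oneLine (n : ℕ) (w : Equiv.Perm (Fin n)) : (oneLine n w).Nodup :=
  List.nodup_ofFn.mpr fun i j hij => w.injective (Fin.ext (by simpa using hij))

theorem le_of_mem_oneLine {n : ℕ} {w : Equiv.Perm (Fin n)} {a : ℕ} (ha : a ∈ oneLine n w) :
    a ≤ n := by
  obtain ⟨i, rfl⟩ := List.mem_ofFn.mp ha
  exact (w i).isLt

theorem isChain_hPet_oneLine_iff (n : ℕ) (w : Equiv.Perm (Fin n)) :
    (oneLine n w).IsChain (fun a b => a ≤ hPet n b) ↔
      (oneLine n w).IsChain (fun a b => a ≤ b + 1) :=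
  List.IsChain.iff_of_mem_imp fun a _ ha _ => by
    simp only [hPet, le_min_iff, le_of_mem_oneLine ha, and_true]

theorem IsDecStair.forall_lt_of_lt_head {a b : ℕ} {r : List ℕ} (hs : IsDecStair (b :: r))
    (hab : a < b) (ha : a ∉ b :: r) : ∀ x ∈ b :: r, a < x := by
  induction r generalizing b with
  | nil => simpa using hab
  | cons c r ih =>
    obtain ⟨rfl, hcr⟩ := List.isChain_cons_cons.mp hs
    have hac : a < c := by grind
    intro x hx
    rcases List.mem_cons.mp hx with rfl | hx
    · omega
    · exact ih hcr hac (fun h => ha (List.mem_cons_of_mem _ h)) x hx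

namespace IsIncStaircases

theorem nil : IsIncStaircases [] := ⟨[], rfl, by simp, .nil⟩

theorem cons_of_forall_lt {a : ℕ} {l : List ℕ} (h : IsIncStaircases l) (ha : ∀ x ∈ l, a < x) :
    IsIncStaircases (a :: l) := by
  obtain ⟨blocks, rfl, hblocks, hpw⟩ := h
  refine ⟨[a] :: blocks, rfl, ?_, List.pairwise_cons.mpr ⟨?_, hpw⟩⟩
  · exact List.forall_mem_cons.mpr ⟨⟨List.cons_ne_nil _ _, List.isChain_singleton _⟩, hblocks⟩
  · intro B hB x hx y hy
    rw [List.mem_singleton.mp hx]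
    exact ha y (List.mem_flatten.mpr ⟨B, hB, hy⟩)

theorem exists_head_block {b : ℕ} {t : List ℕ} (h : IsIncStaircases (b :: t)) :
    ∃ B rest, t = B ++ rest.flatten ∧ (∀ c ∈ (b :: B) :: rest, c ≠ [] ∧ IsDecStair c) ∧
      ((b :: B) :: rest).Pairwise (fun b1 b2 => ∀ a ∈ b1, ∀ c ∈ b2, a < c) := by
  obtain ⟨blocks, hflat, hblocks, hpw⟩ := h
  obtain _ | ⟨_ | ⟨c, B⟩, rest⟩ := blocks
  · simp at hflat
  · exact absurd rfl (hblocks [] List.mem_cons_self).1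
  · obtain ⟨rfl, rfl⟩ := List.cons_eq_cons.mp (hflat.trans (List.flatten_cons ..))
    exact ⟨B, rest, rfl, hblocks, hpw⟩

theorem forall_lt_of_lt_head {a b : ℕ} {t : List ℕ} (h : IsIncStaircases (b :: t))
    (hab : a < b) (ha : a ∉ b :: t) : ∀ x ∈ b :: t, a < x := by
  obtain ⟨B, rest, rfl, hblocks, hpw⟩ := h.exists_head_block
  intro x hx
  rw [← List.cons_append, List.mem_append] at hx ha
  rcases hx with hx | hx
  · exact (hblocks _ List.mem_cons_self).2.forall_lt_of_lt_head hab (fun h => ha (.inl h)) x hx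
  · obtain ⟨c, hc, hxc⟩ := List.mem_flatten.mp hx
    exact hab.trans ((List.pairwise_cons.mp hpw).1 c hc b List.mem_cons_self x hxc)

theorem cons_succ {b : ℕ} {t : List ℕ} (h : IsIncStaircases (b :: t)) (hb : b + 1 ∉ t) :
    IsIncStaircases ((b + 1) :: b :: t) := by
  obtain ⟨B, rest, rfl, hblocks, hpw⟩ := h.exists_head_block
  obtain ⟨hrest, hpw⟩ := List.pairwise_cons.mp hpw
  refine ⟨((b + 1) :: b :: B) :: rest, by simp, ?_, List.pairwise_cons.mpr ⟨?_, hpw⟩⟩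
  · intro c hc
    rcases List.mem_cons.mp hc with rfl | hc
    · exact ⟨List.cons_ne_nil _ _, List.isChain_cons_cons.mpr ⟨rfl, (hblocks _ (by simp)).2⟩⟩
    · exact hblocks c (List.mem_cons_of_mem _ hc)
  · intro c hc x hx y hy
    rcases List.mem_cons.mp hx with rfl | hx
    · have hby := hrest c hc b List.mem_cons_self y hy
      have hyt : y ∈ B ++ rest.flatten := List.mem_append_right _ (List.mem_flatten.mpr ⟨c, hc, hy⟩)
      have hyb : y ≠ b + 1 := fun hyb => hb (hyb ▸ hyt)
      omega
    · exact hrest c hc x hx y hy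

theorem isChain {l : List ℕ} (h : IsIncStaircases l) : l.IsChain (fun a b => a ≤ b + 1) := by
  obtain ⟨blocks, rfl, hblocks, hpw⟩ := h
  induction blocks with
  | nil => exact .nil
  | cons B rest ih =>
    obtain ⟨hlt, hpw⟩ := List.pairwise_cons.mp hpw
    have hrest := ih (fun c hc => hblocks c (List.mem_cons_of_mem _ hc)) hpw
    refine List.isChain_append.mpr ⟨?_, hrest, ?_⟩
    · exact (hblocks B List.mem_cons_self).2.imp fun a b hab => hab.ge
    · intro x hx y hy
      obtain ⟨c, hc, hyc⟩ := List.mem_flatten.mp (List.mem_of_mem_head? hy)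
      exact (hlt c hc x (List.mem_of_mem_getLast? hx) y hyc).le.trans (Nat.le_succ _)

end IsIncStaircases

theorem isIncStaircases_of_isChain {l : List ℕ} (hl : l.Nodup)
    (hc : l.IsChain (fun a b => a ≤ b + 1)) : IsIncStaircases l := by
  induction l with
  | nil => exact .nil
  | cons a l ih =>
    have hl' := ih (List.nodup_cons.mp hl).2 hc.tail
    match l, hc with
    | [], _ => exact hl'.cons_of_forall_lt (by simp)
    | b :: t, hc =>
      have ha : a ∉ b :: t := (List.nodup_cons.mp hl).1
      have hab : a ≤ b + 1 := (List.isChain_cons_cons.mp hc).1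
      rcases hab.eq_or_lt with rfl | hle
      · exact hl'.cons_succ fun h => ha (List.mem_cons_of_mem _ h)
      · have hab : a < b := by grind
        exact hl'.cons_of_forall_lt (hl'.forall_lt_of_lt_head hab ha)

theorem isIncStaircases_iff_isChain {l : List ℕ} (hl : l.Nodup) :
    IsIncStaircases l ↔ l.IsChain (fun a b => a ≤ b + 1) :=
  ⟨IsIncStaircases.isChain, isIncStaircases_of_isChain hl⟩

theorem stmt6_general (n : ℕ) (w : Equiv.Perm (Fin n)) :
    IsPermissible n (hPet n) w ↔ IsIncStaircases (oneLine n w) := by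
  rw [isPermissible_iff_isChain, isChain_hPet_oneLine_iff,
    isIncStaircases_iff_isChain (nodup_oneLine n w)]

/-- A permutation `w ∈ S_n` is a permissible filling of the one-row diagram for
the Peterson Hessenberg function iff its one-line notation is an increasing
sequence of decreasing staircases. -/
theorem stmt6 (n : ℕ) [NeZero n] (w : Equiv.Perm (Fin n)) :
    IsPermissible n (hPet n) w ↔ IsIncStaircases (oneLine n w) :=
  stmt6_general n w
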